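/- arXiv:1606.01342 — 2 statements merged into one kernel-verified Lean document; each statement's English description precedes it below -/
import Mathlib

section
/- Let T be a spanning tree minimizing cost c : E → ℝ, and suppose there are distinct indices j₁,...,j_κ and distinct edges e_{j_1},...,e_{j_κ} ∉ T, f_{j_1},...,f_{j_κ} ∈ T with f_{j_i} ∈ P_T(e_{j_i}) and f_{j_i} ∈ P_T(e_{j_{i+1}}) (cyclically), and c(e_{j_i}) = c(f_{j_i}) for all i. Then all 2κ edges e_{j_1},...,e_{j_κ}, f_{j_1},...,f_{j_κ} have the same cost c. -/
/-!
Swapping a tree edge `f` on the tree path of a non-tree edge `e` yields again a spanning tree: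
`e` reconnects the two sides of `T - f`, and the number of edges is unchanged. Minimality of `T`
therefore gives `c f ≤ c e`, so along the cycle `c (e i) = c (f i) ≤ c (e (i + 1))`, and a
cyclic chain of inequalities consists of equalities.
-/

open Finset

/-- `T` is (the edge set of) a spanning tree of `G`: its edges are edges of `G`
and the graph formed by these edges is a tree (connected and acyclic, spanning all vertices). -/
def IsSpanningTree {V : Type*} (G : SimpleGraph V) (T : Finset (Sym2 V)) : Prop :=
  (T : Set (Sym2 V)) ⊆ G.edgeSet ∧ (SimpleGraph.fromEdgeSet (T : Set (Sym2 V))).IsTree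

/-- `f` lies on the unique path in the tree `T` joining the endpoints of `e`:
equivalently, `f ∈ T` and removing `f` disconnects the endpoints of `e` in `T`. -/
def OnTreePath {V : Type*} (T : Finset (Sym2 V)) (e f : Sym2 V) : Prop :=
  f ∈ T ∧ ∀ u v : V, e = s(u, v) →
    ¬ (SimpleGraph.fromEdgeSet ((T : Set (Sym2 V)) \ {f})).Reachable u v

/-- Path optimality conditions for a spanning tree `T` of `G` with edge costs `w`. -/
def PathOpt {V : Type*} (G : SimpleGraph V) (T : Finset (Sym2 V)) (w : Sym2 V → ℝ) : Prop :=
  ∀ u v : V, s(u, v) ∈ G.edgeSet → s(u, v) ∉ T →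
    ∀ f, OnTreePath T s(u, v) f → w f ≤ w (s(u, v))

/-- The sufficient pair optimality conditions of Theorem 2, with explicit witnesses `α`, `β`. -/
def SuffPairOpt {V : Type*} [Fintype V] [DecidableEq V] (G : SimpleGraph V)
    (C c : Sym2 V → ℝ) (θ : ℝ) (X Y : Finset (Sym2 V)) (α β : Sym2 V → ℝ) : Prop :=
  (∀ e, 0 ≤ α e) ∧ (∀ e, 0 ≤ β e) ∧ (∀ e ∈ G.edgeSet, α e + β e = θ) ∧
  (∀ T, IsSpanningTree G T → ∑ e ∈ X, (C e - α e) ≤ ∑ e ∈ T, (C e - α e)) ∧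
  (∀ T, IsSpanningTree G T → ∑ e ∈ Y, (c e - β e) ≤ ∑ e ∈ T, (c e - β e)) ∧
  (∀ e ∈ X \ Y, α e = 0) ∧ (∀ e ∈ Y \ X, β e = 0)

/-- Arcs of the admissible graph for the pair `(X,Y)` with reduced costs `Cs`, `cs`:
an `X`-arc `(a,b)` with `a ∉ X`, `b ∈ P_X(a)`, `Cs a = Cs b`, or a `Y`-arc `(a,b)`
(i.e. `(v_f,v_e)` with `f = a`, `e = b`) with `b ∉ Y`, `a ∈ P_Y(b)`, `cs b = cs a`. -/
def AdmArc {V : Type*} [Fintype V] [DecidableEq V] (X Y : Finset (Sym2 V))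
    (Cs cs : Sym2 V → ℝ) (a b : Sym2 V) : Prop :=
  (a ∉ X ∧ OnTreePath X a b ∧ Cs a = Cs b) ∨ (b ∉ Y ∧ OnTreePath Y b a ∧ cs b = cs a)

/-- A node of the admissible graph is admissible if it is reachable (by a directed path)
from some node `v_g` with `g ∈ Y \ X`. -/
def AdmNode {V : Type*} [Fintype V] [DecidableEq V] (X Y : Finset (Sym2 V))
    (Cs cs : Sym2 V → ℝ) (h : Sym2 V) : Prop :=
  ∃ g, g ∈ Y ∧ g ∉ X ∧ Relation.ReflTransGen (AdmArc X Y Cs cs) g h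

namespace SimpleGraph

variable {V : Type*} {H H' : SimpleGraph V} {p q u v x : V}

theorem Reachable.deleteEdges_reachable_or (h : H.Reachable x p) :
    (H.deleteEdges {s(p, q)}).Reachable x p ∨ (H.deleteEdges {s(p, q)}).Reachable x q := by
  obtain ⟨w⟩ := h
  induction w with
  | nil => exact Or.inl (Reachable.refl _)
  | @cons a b p hab _ ih =>
    by_cases hpq : s(a, b) = s(p, q)
    · rcases Sym2.eq_iff.mp hpq with ⟨rfl, -⟩ | ⟨rfl, -⟩
      · exact Or.inl (Reachable.refl _)
      · exact Or.inr (Reachable.refl _)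
    · have hab' : (H.deleteEdges {s(p, q)}).Adj a b := deleteEdges_adj.mpr ⟨hab, hpq⟩
      exact ih.imp hab'.reachable.trans hab'.reachable.trans

theorem edgeSet_fromEdgeSet_of_subset {G : SimpleGraph V} {s : Set (Sym2 V)}
    (hs : s ⊆ G.edgeSet) : (fromEdgeSet s).edgeSet = s := by
  rw [edgeSet_fromEdgeSet, sdiff_eq_left, Set.disjoint_left]
  exact fun e he => G.not_isDiag_of_mem_edgeSet (hs he)

theorem Connected.of_deleteEdges_le (hH : H.Connected) (hle : H.deleteEdges {s(p, q)} ≤ H')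
    (huv : ¬ (H.deleteEdges {s(p, q)}).Reachable u v) (huv' : H'.Reachable u v) :
    H'.Connected := by
  have hside : ∀ x, H'.Reachable x p ∨ H'.Reachable x q := fun x =>
    ((hH.preconnected x p).deleteEdges_reachable_or).imp (·.mono hle) (·.mono hle)
  have hpq : H'.Reachable p q := by
    rcases (hH.preconnected u p).deleteEdges_reachable_or (q := q) with hup | huq <;>
    rcases (hH.preconnected v p).deleteEdges_reachable_or (q := q) with hvp | hvq
    · exact absurd (hup.trans hvp.symm) huv
    · exact (hup.mono hle).symm.trans (huv'.trans (hvq.mono hle))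
    · exact (hvp.mono hle).symm.trans (huv'.symm.trans (huq.mono hle))
    · exact absurd (huq.trans hvq.symm) huv
  have := hH.nonempty
  refine Connected.mk fun x y => ?_
  have hxp : ∀ x, H'.Reachable x p := fun x => (hside x).elim id (·.trans hpq.symm)
  exact (hxp x).trans (hxp y).symm

end SimpleGraph

open SimpleGraph

section SpanningTree

variable {V : Type*} {G : SimpleGraph V} {T : Finset (Sym2 V)}

theorem isSpanningTree_iff_connected_and_card [Finite V] :
    IsSpanningTree G T ↔ (T : Set (Sym2 V)) ⊆ G.edgeSet ∧
      (fromEdgeSet (T : Set (Sym2 V))).Connected ∧ #T + 1 = Nat.card V := by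
  refine and_congr_right fun hT => ?_
  rw [isTree_iff_connected_and_card, edgeSet_fromEdgeSet_of_subset hT, Nat.card_coe_set_eq,
    Set.ncard_coe_finset]

theorem IsSpanningTree.exchange [Finite V] [DecidableEq V] (hT : IsSpanningTree G T)
    {e f : Sym2 V} (heG : e ∈ G.edgeSet) (heT : e ∉ T) (hf : OnTreePath T e f) :
    IsSpanningTree G (insert e (T.erase f)) := by
  obtain ⟨hfT, hsep⟩ := hf
  rw [isSpanningTree_iff_connected_and_card] at hT ⊢
  obtain ⟨hTG, hconn, hcard⟩ := hT
  refine ⟨?_, ?_, ?_⟩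
  · rw [coe_insert, coe_erase]
    exact Set.insert_subset heG (Set.sdiff_subset.trans hTG)
  · induction e using Sym2.ind with | _ u v => ?_
    induction f using Sym2.ind with | _ p q => ?_
    have hdel : fromEdgeSet ((T : Set (Sym2 V)) \ {s(p, q)}) =
        (fromEdgeSet (T : Set (Sym2 V))).deleteEdges {s(p, q)} := fromEdgeSet_sdiff _ _
    refine hconn.of_deleteEdges_le ?_ (hdel ▸ hsep u v rfl) ?_
    · rw [← hdel]
      exact fromEdgeSet_mono (by rw [coe_insert, coe_erase]; exact Set.subset_insert _ _)
    · refine (fromEdgeSet_adj _ |>.mpr ⟨?_, G.ne_of_adj heG⟩).reachable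
      simp
  · rw [card_insert_of_notMem (fun h => heT (mem_of_mem_erase h)), card_erase_of_mem hfT]
    have : 0 < #T := card_pos.mpr ⟨_, hfT⟩
    omega

theorem IsSpanningTree.cost_le_of_onTreePath [Finite V] {M : Type*} [AddCommMonoid M]
    [PartialOrder M] [IsOrderedCancelAddMonoid M] (hT : IsSpanningTree G T)
    (c : Sym2 V → M) (hTmin : ∀ T', IsSpanningTree G T' → ∑ e ∈ T, c e ≤ ∑ e ∈ T', c e)
    {e f : Sym2 V} (heG : e ∈ G.edgeSet) (heT : e ∉ T) (hf : OnTreePath T e f) :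
    c f ≤ c e := by
  classical
  have hexch := hTmin _ (hT.exchange heG heT hf)
  rw [sum_insert (fun h => heT (mem_of_mem_erase h)), ← add_sum_erase T c hf.1] at hexch
  exact le_of_add_le_add_right hexch

end SpanningTree

theorem Fin.apply_eq_of_forall_le_apply_add_one {α : Type*} [PartialOrder α] {n : ℕ}
    {g : Fin (n + 1) → α} (h : ∀ i, g i ≤ g (i + 1)) (i j : Fin (n + 1)) : g i = g j := by
  have hle (i j : Fin (n + 1)) : g i ≤ g j := by
    have hstep (d : Fin (n + 1)) : g i ≤ g (i + d) := by
      induction d using Fin.induction with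
      | zero => simp
      | succ d ih =>
        rw [← Fin.coeSucc_eq_succ, ← add_assoc]
        exact ih.trans (h _)
    simpa using hstep (j - i)
  exact (hle i j).antisymm (hle j i)

/-- along an alternating cycle of tight exchanges in a minimum spanning tree,
all involved edges share the same cost. -/
theorem stmt7 {V : Type*} [Fintype V] (G : SimpleGraph V)
    (T : Finset (Sym2 V)) (hT : IsSpanningTree G T)
    (c : Sym2 V → ℝ)
    (hTmin : ∀ T', IsSpanningTree G T' → ∑ e ∈ T, c e ≤ ∑ e ∈ T', c e)
    (κ : ℕ) (hκ : 1 ≤ κ) (e f : Fin κ → Sym2 V)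
    (heG : ∀ i, e i ∈ G.edgeSet) (heT : ∀ i, e i ∉ T)
    (hfP2 : ∀ i : Fin κ, OnTreePath T (e ⟨(i.1 + 1) % κ, Nat.mod_lt _ (by omega)⟩) (f i))
    (htight : ∀ i, c (e i) = c (f i)) :
    ∀ i j : Fin κ, c (e i) = c (e j) ∧ c (f i) = c (f j) ∧ c (e i) = c (f j) := by
  obtain ⟨n, rfl⟩ : ∃ n, κ = n + 1 := ⟨κ - 1, by omega⟩
  have hsucc (i : Fin (n + 1)) : (⟨(i.1 + 1) % (n + 1), Nat.mod_lt _ (by omega)⟩ : Fin (n + 1)) =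
      i + 1 := Fin.ext (by simp [Fin.val_add])
  have hstep : ∀ i, c (e i) ≤ c (e (i + 1)) := fun i =>
    (htight i).trans_le (hT.cost_le_of_onTreePath c hTmin (heG _) (heT _) (hsucc i ▸ hfP2 i))
  have he := Fin.apply_eq_of_forall_le_apply_add_one hstep
  intro i j
  exact ⟨he i j, by rw [← htight, ← htight, he i j], by rw [← htight, he i j]⟩
end

section
/- Let G be a connected graph, θ ≥ 0, and for functions α, β : E → ℝ≥0 with α(e) + β(e) ≥ θ for all e, define g(α,β) = min_{X∈Φ} ∑_{e∈X}(C(e) - α(e)) + min_{Y∈Φ} ∑_{e∈Y}(c(e) - β(e)) + θL. Then for every pair of spanning trees (X,Y) of G, g(α,β) ≤ ∑_{e∈X} C(e) + ∑_{e∈Y} c(e) - θ·|X ∩ Y| + θ·L whenever α vanishes outside Y and β vanishes outside X (equivalently, whenever ∑_{e∈X} α(e) + ∑_{e∈Y} β(e) ≤ θ·|X∩Y| + ∑_{e∈X∩Y}(α(e)+β(e)-θ) holds with α,β supported appropriately); in particular, weak duality holds: sup over admissible (α,β) of g(α,β) is at most the Lagrangian value φ(θ) = min over pairs (X,Y) of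 spanning trees of ∑_{e∈X} C(e) + ∑_{e∈Y} c(e) - θ|X∩Y| + θL. -/
/-!
Evaluating each of the two spanning tree minima at the trees `X` and `Y` themselves bounds the
dual value by `∑_X C + ∑_Y c - (∑_X α + ∑_Y β) + θL`. Since `α, β ≥ 0`, the subtracted term is at
least `∑_{X ∩ Y} (α + β)`, which by `α + β ≥ θ` is at least `θ |X ∩ Y|`.
-/

open Finset

theorem sInf_setOf_exists_eq_le {ι : Type*} [Finite ι] {P : ι → Prop} (f : ι → ℝ) {i : ι}
    (hi : P i) : sInf {v : ℝ | ∃ j, P j ∧ v = f j} ≤ f i := by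
  have hfin : {v : ℝ | ∃ j, P j ∧ v = f j}.Finite :=
    (Set.finite_range f).subset (by rintro _ ⟨j, -, rfl⟩; exact ⟨j, rfl⟩)
  exact csInf_le hfin.bddBelow ⟨i, hi, rfl⟩

theorem mul_card_inter_le_sum_add_sum {ι : Type*} [DecidableEq ι] {X Y : Finset ι}
    {α β : ι → ℝ} {θ : ℝ} (hα : ∀ e ∈ X, 0 ≤ α e) (hβ : ∀ e ∈ Y, 0 ≤ β e)
    (hαβ : ∀ e ∈ X ∩ Y, θ ≤ α e + β e) :
    θ * #(X ∩ Y) ≤ ∑ e ∈ X, α e + ∑ e ∈ Y, β e := by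
  have hinter : θ * #(X ∩ Y) ≤ ∑ e ∈ X ∩ Y, α e + ∑ e ∈ X ∩ Y, β e := by
    rw [← sum_add_distrib, mul_comm, ← nsmul_eq_mul]
    exact card_nsmul_le_sum _ _ _ hαβ
  have hαX : ∑ e ∈ X ∩ Y, α e ≤ ∑ e ∈ X, α e :=
    sum_le_sum_of_subset_of_nonneg inter_subset_left fun e he _ => hα e he
  have hβY : ∑ e ∈ X ∩ Y, β e ≤ ∑ e ∈ Y, β e :=
    sum_le_sum_of_subset_of_nonneg inter_subset_right fun e he _ => hβ e he
  linarith

theorem stmt17_general {V : Type*} [Fintype V] [DecidableEq V] (G : SimpleGraph V)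
    (C c : Sym2 V → ℝ) (θ : ℝ) (L : ℤ)
    (α β : Sym2 V → ℝ) (hα : ∀ e, 0 ≤ α e) (hβ : ∀ e, 0 ≤ β e)
    (hαβ : ∀ e ∈ G.edgeSet, θ ≤ α e + β e) :
    ∀ X Y : Finset (Sym2 V), IsSpanningTree G X → IsSpanningTree G Y →
      sInf {v : ℝ | ∃ T : Finset (Sym2 V), IsSpanningTree G T ∧
          v = ∑ e ∈ T, (C e - α e)} +
      sInf {v : ℝ | ∃ T : Finset (Sym2 V), IsSpanningTree G T ∧
          v = ∑ e ∈ T, (c e - β e)} + θ * (L : ℝ) ≤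
      ∑ e ∈ X, C e + ∑ e ∈ Y, c e - θ * ((X ∩ Y).card : ℝ) + θ * (L : ℝ) := by
  intro X Y hX hY
  have hX_min := sInf_setOf_exists_eq_le (fun T => ∑ e ∈ T, (C e - α e)) hX
  have hY_min := sInf_setOf_exists_eq_le (fun T => ∑ e ∈ T, (c e - β e)) hY
  have hcover : θ * #(X ∩ Y) ≤ ∑ e ∈ X, α e + ∑ e ∈ Y, β e :=
    mul_card_inter_le_sum_add_sum (fun e _ => hα e) (fun e _ => hβ e)
      fun e he => hαβ e (hX.1 (mem_coe.2 (mem_inter.1 he).1))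
  rw [sum_sub_distrib] at hX_min hY_min
  linarith

/-- weak duality underlying Lemma 1: for any admissible dual split
`α, β ≥ 0` with `α + β ≥ θ` on the edges, the dual value `g(α,β)` lower-bounds the
Lagrangian value of every pair of spanning trees. -/
theorem stmt17 {V : Type*} [Fintype V] [DecidableEq V] (G : SimpleGraph V)
    (hG : G.Connected) (C c : Sym2 V → ℝ) (θ : ℝ) (hθ : 0 ≤ θ) (L : ℤ)
    (α β : Sym2 V → ℝ) (hα : ∀ e, 0 ≤ α e) (hβ : ∀ e, 0 ≤ β e)
    (hαβ : ∀ e ∈ G.edgeSet, θ ≤ α e + β e) :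
    ∀ X Y : Finset (Sym2 V), IsSpanningTree G X → IsSpanningTree G Y →
      sInf {v : ℝ | ∃ T : Finset (Sym2 V), IsSpanningTree G T ∧
          v = ∑ e ∈ T, (C e - α e)} +
      sInf {v : ℝ | ∃ T : Finset (Sym2 V), IsSpanningTree G T ∧
          v = ∑ e ∈ T, (c e - β e)} + θ * (L : ℝ) ≤
      ∑ e ∈ X, C e + ∑ e ∈ Y, c e - θ * ((X ∩ Y).card : ℝ) + θ * (L : ℝ) :=
  stmt17_general G C c θ L α β hα hβ hαβ
end
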